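/- arXiv:1907.08369 — 4 statements merged into one kernel-verified Lean document; each statement's English description precedes it below -/
import Mathlib

section
/- For all real c, the second moment of the shifted asymmetric loss satisfies ∫_{-∞}^{∞} L(z + c)² · f(z) dz = (k₁² + k₂²)·c²/2 + Sgn(c)·((k₁² − k₂²)·c² / (2·Γ(a)))·γ(a, |c/b|^{1/a}) + ((k₁² − k₂²)·b·c / Γ(a))·Γ-upper(2a, |c/b|^{1/a}) + (k₁² + k₂²)·b²·Γ(3a) / (2·Γ(a)) + Sgn(c)·((k₁² − k₂²)·b² / (2·Γ(a)))·γ(3a, |c/b|^{1/a}). -/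
open Real MeasureTheory Filter

/-- The asymmetric loss function. -/
noncomputable def asymLoss (k₁ k₂ z : ℝ) : ℝ := if 0 ≤ z then k₁ * z else -k₂ * z

/-- The generalized Gaussian density with mean zero. -/
noncomputable def genGauss (a b z : ℝ) : ℝ :=
  (2 * a * b * Real.Gamma a)⁻¹ * Real.exp (-(|z / b| ^ (1 / a)))

/-- The lower incomplete gamma function. -/
noncomputable def lowerGamma (p x : ℝ) : ℝ := ∫ t in (0:ℝ)..x, t ^ (p - 1) * Real.exp (-t)

/-- The upper incomplete gamma function. -/
noncomputable def upperGamma (p x : ℝ) : ℝ := ∫ t in Set.Ioi x, t ^ (p - 1) * Real.exp (-t)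

/-- The sign function used in the paper: `1` for `c ≥ 0`, `-1` for `c < 0`. -/
noncomputable def Sgn (c : ℝ) : ℝ := if 0 ≤ c then 1 else -1

/-! Since `L(w)² = k₁² w² + (k₂² - k₁²) min(w, 0)²`, the second moment splits into `k₁²` times
`∫ (z + c)² f = c² + b² Γ(3a) / Γ(a)` and `k₂² - k₁²` times `∫ min(z + c, 0)² f`, which the
reflection `z ↦ -z` (the density is even) turns into the tail `∫_{z > c} (z - c)² f(z) dz`.
For `c ≥ 0` the substitution `z = b t^a` identifies the tail moments `∫_{z > c} zⁿ f(z) dz` with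
upper incomplete gamma functions, and `γ(p, X) + Γ(p, X) = Γ(p)` gives the stated form. For
`c < 0` the same reflection swaps `k₁` with `k₂` and `c` with `-c`. -/

open Set

theorem integrableOn_rpow_mul_exp_neg_Ioi {p X : ℝ} (hp : 0 < p) (hX : 0 ≤ X) :
    IntegrableOn (fun t : ℝ => t ^ (p - 1) * exp (-t)) (Ioi X) :=
  ((GammaIntegral_convergent hp).mono_set (Ioi_subset_Ioi hX)).congr_fun
    (fun _ _ => mul_comm _ _) measurableSet_Ioi

theorem upperGamma_zero {p : ℝ} (hp : 0 < p) : upperGamma p 0 = Gamma p := by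
  rw [upperGamma, Gamma_eq_integral hp]
  exact setIntegral_congr_fun measurableSet_Ioi fun _ _ => mul_comm _ _

theorem lowerGamma_add_upperGamma {p X : ℝ} (hp : 0 < p) (hX : 0 ≤ X) :
    lowerGamma p X + upperGamma p X = Gamma p := by
  rw [← upperGamma_zero hp, lowerGamma, upperGamma, upperGamma]
  exact intervalIntegral.integral_interval_add_Ioi (integrableOn_rpow_mul_exp_neg_Ioi hp le_rfl)
    (integrableOn_rpow_mul_exp_neg_Ioi hp hX)

section Kernel

variable {a b : ℝ}

theorem integrableOn_Ioi_pow_mul_exp_neg_div_rpow (ha : 0 < a) (hb : 0 < b) (n : ℕ) {x : ℝ}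
    (hx : 0 ≤ x) : IntegrableOn (fun z => z ^ n * exp (-(z / b) ^ (1 / a))) (Ioi x) := by
  refine ((integrableOn_rpow_mul_exp_neg_mul_rpow (s := n) (p := 1 / a) (b := (b ^ (1 / a))⁻¹)
    (by linarith [n.cast_nonneg (α := ℝ)]) (by positivity) (by positivity)).mono_set
    (Ioi_subset_Ioi hx)).congr_fun (fun z hz => ?_) measurableSet_Ioi
  have hz : 0 ≤ z := hx.trans (le_of_lt hz)
  simp only [rpow_natCast, div_rpow hz hb.le, neg_mul, inv_mul_eq_div]

theorem integral_Ioi_pow_mul_exp_neg_div_rpow (ha : 0 < a) (hb : 0 < b) (n : ℕ) {x : ℝ}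
    (hx : 0 ≤ x) :
    ∫ z in Ioi x, z ^ n * exp (-(z / b) ^ (1 / a)) =
      a * b ^ (n + 1) * upperGamma ((n + 1) * a) ((x / b) ^ (1 / a)) := by
  have hxb : 0 ≤ x / b := by positivity
  calc ∫ z in Ioi x, z ^ n * exp (-(z / b) ^ (1 / a))
      = b * ∫ u in Ioi (x / b), b ^ n * (u ^ n * exp (-u ^ (1 / a))) := by
        conv_lhs => rw [← mul_div_cancel₀ x hb.ne', ← integral_comp_mul_left_Ioi' _ _ hb]
        rw [smul_eq_mul]
        congr 1
        refine setIntegral_congr_fun measurableSet_Ioi fun u _ => ?_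
        rw [mul_div_cancel_left₀ _ hb.ne', mul_pow, mul_assoc]
    _ = b * ∫ t in Ioi ((x / b) ^ (1 / a)), a * b ^ n * (t ^ ((n + 1) * a - 1) * exp (-t)) := by
        rw [← integral_comp_rpow_Ioi_of_pos' (g := fun u => b ^ n * (u ^ n * exp (-u ^ (1 / a))))
          ha hxb, one_div]
        congr 1
        refine setIntegral_congr_fun measurableSet_Ioi fun t ht => ?_
        have ht : 0 < t := lt_of_le_of_lt (by positivity) ht
        simp only [smul_eq_mul]
        rw [← rpow_mul ht.le, mul_inv_cancel₀ ha.ne', rpow_one, ← rpow_natCast (t ^ a),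
          ← rpow_mul ht.le]
        have : t ^ ((n + 1) * a - 1) = t ^ (a - 1) * t ^ (a * n) := by
          rw [← rpow_add ht]; ring_nf
        rw [this]; ring
    _ = a * b ^ (n + 1) * upperGamma ((n + 1) * a) ((x / b) ^ (1 / a)) := by
        rw [integral_const_mul, upperGamma, pow_succ]
        ring

theorem integrableOn_Ioi_sub_sq_mul_exp_neg_div_rpow (ha : 0 < a) (hb : 0 < b) {x : ℝ}
    (hx : 0 ≤ x) (d : ℝ) :
    IntegrableOn (fun z => (z - d) ^ 2 * exp (-(z / b) ^ (1 / a))) (Ioi x) := by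
  have h n := integrableOn_Ioi_pow_mul_exp_neg_div_rpow ha hb n hx
  refine ((h 2).sub (((h 1).const_mul (2 * d)).sub ((h 0).const_mul (d ^ 2)))).congr_fun
    (fun z _ => ?_) measurableSet_Ioi
  simp only [Pi.sub_apply]
  ring

theorem integral_Ioi_sub_sq_mul_exp_neg_div_rpow (ha : 0 < a) (hb : 0 < b) {x : ℝ}
    (hx : 0 ≤ x) (d : ℝ) :
    ∫ z in Ioi x, (z - d) ^ 2 * exp (-(z / b) ^ (1 / a)) =
      a * b * (b ^ 2 * upperGamma (3 * a) ((x / b) ^ (1 / a))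
        - 2 * d * b * upperGamma (2 * a) ((x / b) ^ (1 / a))
        + d ^ 2 * upperGamma a ((x / b) ^ (1 / a))) := by
  have h n := integrableOn_Ioi_pow_mul_exp_neg_div_rpow ha hb n hx
  have hexp : (fun z => (z - d) ^ 2 * exp (-(z / b) ^ (1 / a))) = fun z =>
      z ^ 2 * exp (-(z / b) ^ (1 / a)) - (2 * d * (z ^ 1 * exp (-(z / b) ^ (1 / a)))
        - d ^ 2 * (z ^ 0 * exp (-(z / b) ^ (1 / a)))) := by
    funext z; ring
  have hlin : IntegrableOn (fun z => 2 * d * (z ^ 1 * exp (-(z / b) ^ (1 / a)))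
      - d ^ 2 * (z ^ 0 * exp (-(z / b) ^ (1 / a)))) (Ioi x) :=
    ((h 1).const_mul _).sub ((h 0).const_mul _)
  rw [hexp, integral_sub (h 2) hlin, integral_sub ((h 1).const_mul _) ((h 0).const_mul _),
    integral_const_mul, integral_const_mul]
  simp only [integral_Ioi_pow_mul_exp_neg_div_rpow ha hb _ hx]
  norm_num
  ring

end Kernel

section Reflection

variable {E : Type*} [NormedAddCommGroup E] {F : ℝ → E}

theorem integrableOn_Iic_zero_of_comp_neg (h : IntegrableOn (fun z => F (-z)) (Ioi 0)) :
    IntegrableOn F (Iic 0) := by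
  have h₀ : IntegrableOn (fun z => F (-z)) (Ici (-0)) := by
    rw [neg_zero]; exact (integrableOn_Ici_iff_integrableOn_Ioi).mpr h
  simpa only [neg_neg] using h₀.comp_neg_Iic

theorem integrable_of_integrableOn_Ioi_of_comp_neg (h : IntegrableOn F (Ioi 0))
    (h' : IntegrableOn (fun z => F (-z)) (Ioi 0)) : Integrable F := by
  rw [← integrableOn_univ, ← Iic_union_Ioi (a := (0 : ℝ))]
  exact (integrableOn_Iic_zero_of_comp_neg h').union h

theorem integral_eq_integral_Ioi_add_integral_Ioi_comp_neg [NormedSpace ℝ E]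
    (h : IntegrableOn F (Ioi 0)) (h' : IntegrableOn (fun z => F (-z)) (Ioi 0)) :
    ∫ z, F z = (∫ z in Ioi 0, F z) + ∫ z in Ioi 0, F (-z) := by
  rw [← intervalIntegral.integral_Iic_add_Ioi (integrableOn_Iic_zero_of_comp_neg h') h,
    integral_comp_neg_Ioi, neg_zero, add_comm]

theorem min_add_sq_mul_eq_indicator_comp_neg {g : ℝ → ℝ} (hg : ∀ z, g (-z) = g z) (c z : ℝ) :
    min (z + c) 0 ^ 2 * g z = (Ioi c).indicator (fun z => (z - c) ^ 2 * g z) (-z) := by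
  by_cases hz : -z ∈ Ioi c
  · rw [indicator_of_mem hz, min_eq_left (by linarith [mem_Ioi.mp hz]), hg]
    ring
  · rw [indicator_of_notMem hz, min_eq_right (by linarith [not_lt.mp (mt mem_Ioi.mpr hz)])]
    ring

theorem integrable_min_add_sq_mul_of_even {g : ℝ → ℝ} (hg : ∀ z, g (-z) = g z) {c : ℝ}
    (h : IntegrableOn (fun z => (z - c) ^ 2 * g z) (Ioi c)) :
    Integrable (fun z => min (z + c) 0 ^ 2 * g z) := by
  simpa only [← min_add_sq_mul_eq_indicator_comp_neg hg c] using
    (h.integrable_indicator measurableSet_Ioi).comp_neg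

theorem integral_min_add_sq_mul_of_even {g : ℝ → ℝ} (hg : ∀ z, g (-z) = g z) (c : ℝ) :
    ∫ z, min (z + c) 0 ^ 2 * g z = ∫ z in Ioi c, (z - c) ^ 2 * g z := by
  simp only [min_add_sq_mul_eq_indicator_comp_neg hg c]
  rw [integral_neg_eq_self, integral_indicator measurableSet_Ioi]

end Reflection

theorem asymLoss_neg (k₁ k₂ z : ℝ) : asymLoss k₁ k₂ (-z) = asymLoss k₂ k₁ z := by
  simp only [asymLoss]
  rcases lt_trichotomy z 0 with h | rfl | h
  · rw [if_pos (by linarith), if_neg (not_le.mpr h)]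
    ring
  · simp
  · rw [if_neg (not_le.mpr (by linarith)), if_pos h.le]
    ring

theorem asymLoss_sq (k₁ k₂ w : ℝ) :
    asymLoss k₁ k₂ w ^ 2 = k₁ ^ 2 * w ^ 2 + (k₂ ^ 2 - k₁ ^ 2) * min w 0 ^ 2 := by
  rw [asymLoss]
  split_ifs with h
  · rw [min_eq_right h]; ring
  · rw [min_eq_left (not_le.mp h).le]; ring

theorem genGauss_neg (a b z : ℝ) : genGauss a b (-z) = genGauss a b z := by
  simp only [genGauss, neg_div, abs_neg]

section GenGauss

variable {a b : ℝ}

theorem genGauss_of_nonneg (hb : 0 < b) {z : ℝ} (hz : 0 ≤ z) :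
    genGauss a b z = (2 * a * b * Gamma a)⁻¹ * exp (-(z / b) ^ (1 / a)) := by
  rw [genGauss, abs_of_nonneg (div_nonneg hz hb.le)]

theorem integrableOn_Ioi_sub_sq_mul_genGauss (ha : 0 < a) (hb : 0 < b) {x : ℝ} (hx : 0 ≤ x)
    (d : ℝ) : IntegrableOn (fun z => (z - d) ^ 2 * genGauss a b z) (Ioi x) :=
  IntegrableOn.congr_fun ((integrableOn_Ioi_sub_sq_mul_exp_neg_div_rpow ha hb hx d).const_mul
    (2 * a * b * Gamma a)⁻¹) (fun z hz => by
      rw [genGauss_of_nonneg hb (hx.trans (le_of_lt hz))]; ring) measurableSet_Ioi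

theorem integral_Ioi_sub_sq_mul_genGauss (ha : 0 < a) (hb : 0 < b) {x : ℝ} (hx : 0 ≤ x)
    (d : ℝ) :
    ∫ z in Ioi x, (z - d) ^ 2 * genGauss a b z =
      (b ^ 2 * upperGamma (3 * a) ((x / b) ^ (1 / a))
        - 2 * d * b * upperGamma (2 * a) ((x / b) ^ (1 / a))
        + d ^ 2 * upperGamma a ((x / b) ^ (1 / a))) / (2 * Gamma a) := by
  have hΓ := (Gamma_pos_of_pos ha).ne'
  rw [setIntegral_congr_fun measurableSet_Ioi fun z hz => by
      rw [genGauss_of_nonneg hb (hx.trans (le_of_lt hz)), mul_left_comm],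
    integral_const_mul, integral_Ioi_sub_sq_mul_exp_neg_div_rpow ha hb hx]
  field_simp

theorem add_sq_mul_genGauss_comp_neg (c : ℝ) :
    (fun z => (-z + c) ^ 2 * genGauss a b (-z)) = fun z => (z - c) ^ 2 * genGauss a b z := by
  funext z
  rw [genGauss_neg]
  ring

theorem integrable_add_sq_mul_genGauss (ha : 0 < a) (hb : 0 < b) (c : ℝ) :
    Integrable (fun z => (z + c) ^ 2 * genGauss a b z) := by
  refine integrable_of_integrableOn_Ioi_of_comp_neg ?_ ?_
  · simpa only [sub_neg_eq_add] using integrableOn_Ioi_sub_sq_mul_genGauss ha hb le_rfl (-c)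
  · rw [add_sq_mul_genGauss_comp_neg]
    exact integrableOn_Ioi_sub_sq_mul_genGauss ha hb le_rfl c

theorem integral_add_sq_mul_genGauss (ha : 0 < a) (hb : 0 < b) (c : ℝ) :
    ∫ z, (z + c) ^ 2 * genGauss a b z = c ^ 2 + b ^ 2 * Gamma (3 * a) / Gamma a := by
  have h := integrableOn_Ioi_sub_sq_mul_genGauss ha hb le_rfl
  have hright := integral_Ioi_sub_sq_mul_genGauss ha hb le_rfl (-c)
  simp only [sub_neg_eq_add] at hright
  rw [integral_eq_integral_Ioi_add_integral_Ioi_comp_neg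
    (by simpa only [sub_neg_eq_add] using h (-c))
    (by rw [add_sq_mul_genGauss_comp_neg]; exact h c), add_sq_mul_genGauss_comp_neg, hright,
    integral_Ioi_sub_sq_mul_genGauss ha hb le_rfl]
  simp only [zero_div, zero_rpow (one_div_ne_zero ha.ne'), upperGamma_zero ha,
    upperGamma_zero (by positivity : 0 < 2 * a), upperGamma_zero (by positivity : 0 < 3 * a)]
  field_simp
  ring

theorem integral_asymLoss_sq_mul_genGauss (ha : 0 < a) (hb : 0 < b) (k₁ k₂ c : ℝ) :
    ∫ z, asymLoss k₁ k₂ (z + c) ^ 2 * genGauss a b z =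
      k₁ ^ 2 * (c ^ 2 + b ^ 2 * Gamma (3 * a) / Gamma a)
        + (k₂ ^ 2 - k₁ ^ 2) * ∫ z in Ioi c, (z - c) ^ 2 * genGauss a b z := by
  have h₁ := integrable_add_sq_mul_genGauss ha hb c
  have h₂ := integrable_min_add_sq_mul_of_even (genGauss_neg a b)
    (by simpa only [sub_eq_add_neg] using (integrable_add_sq_mul_genGauss ha hb (-c)).integrableOn)
  simp_rw [asymLoss_sq, add_mul, mul_assoc]
  rw [integral_add (h₁.const_mul _) (h₂.const_mul _), integral_const_mul, integral_const_mul,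
    integral_add_sq_mul_genGauss ha hb, integral_min_add_sq_mul_of_even (genGauss_neg a b)]

end GenGauss

theorem second_moment_shifted_loss_general (a b k₁ k₂ : ℝ) (ha : 0 < a) (hb : 0 < b)
    (c : ℝ) :
    ∫ z, (asymLoss k₁ k₂ (z + c)) ^ 2 * genGauss a b z =
      (k₁ ^ 2 + k₂ ^ 2) * c ^ 2 / 2
      + Sgn c * ((k₁ ^ 2 - k₂ ^ 2) * c ^ 2 / (2 * Real.Gamma a))
          * lowerGamma a (|c / b| ^ (1 / a))
      + (k₁ ^ 2 - k₂ ^ 2) * b * c / Real.Gamma a * upperGamma (2 * a) (|c / b| ^ (1 / a))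
      + (k₁ ^ 2 + k₂ ^ 2) * b ^ 2 * Real.Gamma (3 * a) / (2 * Real.Gamma a)
      + Sgn c * ((k₁ ^ 2 - k₂ ^ 2) * b ^ 2 / (2 * Real.Gamma a))
          * lowerGamma (3 * a) (|c / b| ^ (1 / a)) := by
  have hΓ := (Gamma_pos_of_pos ha).ne'
  have hX : 0 ≤ |c / b| ^ (1 / a) := by positivity
  rw [eq_sub_of_add_eq (lowerGamma_add_upperGamma ha hX),
    eq_sub_of_add_eq (lowerGamma_add_upperGamma (by positivity : 0 < 3 * a) hX)]
  rcases le_or_gt 0 c with hc | hc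
  · rw [integral_asymLoss_sq_mul_genGauss ha hb, integral_Ioi_sub_sq_mul_genGauss ha hb hc,
      Sgn, if_pos hc, abs_of_nonneg (div_nonneg hc hb.le)]
    field_simp
    ring
  · have hreflect : ∫ z, asymLoss k₁ k₂ (z + c) ^ 2 * genGauss a b z =
        ∫ z, asymLoss k₂ k₁ (z + -c) ^ 2 * genGauss a b z := by
      rw [← integral_neg_eq_self]
      congr 1 with z
      rw [genGauss_neg, show -z + c = -(z + -c) by ring, asymLoss_neg]
    rw [hreflect, integral_asymLoss_sq_mul_genGauss ha hb,
      integral_Ioi_sub_sq_mul_genGauss ha hb (neg_nonneg.mpr hc.le), Sgn, if_neg (not_le.mpr hc),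
      abs_of_neg (div_neg_of_neg_of_pos hc hb), neg_div]
    field_simp
    ring

theorem second_moment_shifted_loss (a b k₁ k₂ : ℝ) (ha : 0 < a) (hb : 0 < b)
    (hk₁ : 0 < k₁) (hk₂ : 0 < k₂) (c : ℝ) :
    ∫ z, (asymLoss k₁ k₂ (z + c)) ^ 2 * genGauss a b z =
      (k₁ ^ 2 + k₂ ^ 2) * c ^ 2 / 2
      + Sgn c * ((k₁ ^ 2 - k₂ ^ 2) * c ^ 2 / (2 * Real.Gamma a))
          * lowerGamma a (|c / b| ^ (1 / a))
      + (k₁ ^ 2 - k₂ ^ 2) * b * c / Real.Gamma a * upperGamma (2 * a) (|c / b| ^ (1 / a))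
      + (k₁ ^ 2 + k₂ ^ 2) * b ^ 2 * Real.Gamma (3 * a) / (2 * Real.Gamma a)
      + Sgn c * ((k₁ ^ 2 - k₂ ^ 2) * b ^ 2 / (2 * Real.Gamma a))
          * lowerGamma (3 * a) (|c / b| ^ (1 / a)) :=
  second_moment_shifted_loss_general a b k₁ k₂ ha hb c
end

section
/- The expected value of the unshifted asymmetric loss satisfies ∫_{-∞}^{∞} L(z) · f(z) dz = (k₁ + k₂)·b·Γ(2a) / (2·Γ(a)). -/
open Real MeasureTheory Filter

/-! The density is even and the loss is `k₁ z` for `z ≥ 0` and `-k₂ z` for `z ≤ 0`, so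
reflecting the negative half-line turns the expected loss into `(k₁ + k₂)` times the half-line
first moment `∫₀^∞ z f(z) dz`. Writing `(z / b) ^ (1 / a) = b ^ (-1 / a) * z ^ (1 / a)` makes
that moment a scaled Gamma integral, equal to `(2 a b Γ(a))⁻¹ · a b² Γ(2a)`. -/

open Set

theorem integrableOn_Iic_iff_comp_neg {E : Type*} [NormedAddCommGroup E] {g : ℝ → E} {c : ℝ} :
    IntegrableOn g (Iic c) ↔ IntegrableOn (fun x => g (-x)) (Ioi (-c)) := by
  have h := measurableEmbedding_neg.integrableOn_map_iff (μ := (volume : Measure ℝ)) (f := g)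
    (s := Iic c)
  rw [Measure.map_neg_eq_self] at h
  rw [h, ← integrableOn_Ici_iff_integrableOn_Ioi]
  simp only [neg_preimage, neg_Iic]
  rfl

theorem asymLoss_of_nonneg (k₁ k₂ : ℝ) {z : ℝ} (hz : 0 ≤ z) :
    asymLoss k₁ k₂ z = k₁ * z :=
  if_pos hz

theorem asymLoss_of_nonpos (k₁ k₂ : ℝ) {z : ℝ} (hz : z ≤ 0) :
    asymLoss k₁ k₂ z = -k₂ * z := by
  rcases hz.lt_or_eq with hz | rfl
  · exact if_neg hz.not_ge
  · simp [asymLoss]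

theorem integral_asymLoss_mul_of_even (k₁ k₂ : ℝ) {f : ℝ → ℝ} (hf : ∀ z, f (-z) = f z)
    (hint : IntegrableOn (fun z => z * f z) (Ioi 0)) :
    ∫ z, asymLoss k₁ k₂ z * f z = (k₁ + k₂) * ∫ z in Ioi 0, z * f z := by
  set F := fun z => asymLoss k₁ k₂ z * f z
  have hF_pos : EqOn F (fun z => k₁ * (z * f z)) (Ioi 0) := fun z hz => by
    simp only [F, asymLoss_of_nonneg k₁ k₂ (le_of_lt hz)]; ring
  have hF_neg : EqOn (fun z => F (-z)) (fun z => k₂ * (z * f z)) (Ioi 0) := fun z hz => by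
    simp only [F, hf, asymLoss_of_nonpos k₁ k₂ (neg_nonpos.2 (le_of_lt hz))]; ring
  have hint_pos : IntegrableOn F (Ioi 0) :=
    IntegrableOn.congr_fun (hint.const_mul k₁) hF_pos.symm measurableSet_Ioi
  have hint_neg : IntegrableOn F (Iic 0) := by
    rw [integrableOn_Iic_iff_comp_neg, neg_zero]
    exact IntegrableOn.congr_fun (hint.const_mul k₂) hF_neg.symm measurableSet_Ioi
  rw [← intervalIntegral.integral_Iic_add_Ioi hint_neg hint_pos, ← neg_zero,
    ← integral_comp_neg_Ioi, neg_zero, setIntegral_congr_fun measurableSet_Ioi hF_neg,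
    setIntegral_congr_fun measurableSet_Ioi hF_pos, integral_const_mul, integral_const_mul]
  ring

theorem div_rpow_eq_rpow_neg_mul {x b : ℝ} (p : ℝ) (hx : 0 ≤ x) (hb : 0 ≤ b) :
    (x / b) ^ p = b ^ (-p) * x ^ p := by
  rw [div_rpow hx hb, rpow_neg hb, div_eq_inv_mul]

theorem integrableOn_rpow_mul_exp_neg_div_rpow {p q b : ℝ} (hp : 0 < p) (hq : -1 < q)
    (hb : 0 < b) : IntegrableOn (fun x : ℝ => x ^ q * exp (-(x / b) ^ p)) (Ioi 0) :=
  (integrableOn_rpow_mul_exp_neg_mul_rpow hq hp (rpow_pos_of_pos hb (-p))).congr_fun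
    (fun x hx => by simp only [div_rpow_eq_rpow_neg_mul p (le_of_lt hx) hb.le, neg_mul])
    measurableSet_Ioi

theorem integral_rpow_mul_exp_neg_div_rpow {p q b : ℝ} (hp : 0 < p) (hq : -1 < q) (hb : 0 < b) :
    ∫ x in Ioi 0, x ^ q * exp (-(x / b) ^ p) = b ^ (q + 1) * (1 / p) * Gamma ((q + 1) / p) := by
  rw [setIntegral_congr_fun measurableSet_Ioi (g := fun x => x ^ q * exp (-b ^ (-p) * x ^ p))
    (fun x hx => by simp only [div_rpow_eq_rpow_neg_mul p (le_of_lt hx) hb.le, neg_mul]),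
    integral_rpow_mul_exp_neg_mul_rpow hp hq (rpow_pos_of_pos hb _), ← rpow_mul hb.le]
  congr 3
  field_simp

theorem mul_genGauss_eqOn (a : ℝ) {b : ℝ} (hb : 0 ≤ b) :
    EqOn (fun z => z * genGauss a b z)
      (fun z => (2 * a * b * Gamma a)⁻¹ * (z ^ (1 : ℝ) * exp (-(z / b) ^ (1 / a)))) (Ioi 0) :=
  fun z hz => by
    simp only [genGauss, abs_of_nonneg (div_nonneg (le_of_lt hz) hb), rpow_one]
    ring

theorem integrableOn_Ioi_mul_genGauss {a b : ℝ} (ha : 0 < a) (hb : 0 < b) :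
    IntegrableOn (fun z => z * genGauss a b z) (Ioi 0) :=
  IntegrableOn.congr_fun ((integrableOn_rpow_mul_exp_neg_div_rpow (one_div_pos.2 ha)
    (by norm_num) hb).const_mul _) (mul_genGauss_eqOn a hb.le).symm measurableSet_Ioi

theorem integral_Ioi_mul_genGauss {a b : ℝ} (ha : 0 < a) (hb : 0 < b) :
    ∫ z in Ioi 0, z * genGauss a b z = b * Gamma (2 * a) / (2 * Gamma a) := by
  rw [setIntegral_congr_fun measurableSet_Ioi (mul_genGauss_eqOn a hb.le), integral_const_mul,
    integral_rpow_mul_exp_neg_div_rpow (one_div_pos.2 ha) (by norm_num) hb]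
  norm_num
  field_simp [(Gamma_pos_of_pos ha).ne']

theorem expected_unshifted_loss_general (a b k₁ k₂ : ℝ) (ha : 0 < a) (hb : 0 < b) :
    ∫ z, asymLoss k₁ k₂ z * genGauss a b z =
      (k₁ + k₂) * b * Real.Gamma (2 * a) / (2 * Real.Gamma a) := by
  rw [integral_asymLoss_mul_of_even k₁ k₂ (genGauss_neg a b)
    (integrableOn_Ioi_mul_genGauss ha hb), integral_Ioi_mul_genGauss ha hb]
  ring

theorem expected_unshifted_loss (a b k₁ k₂ : ℝ) (ha : 0 < a) (hb : 0 < b)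
    (hk₁ : 0 < k₁) (hk₂ : 0 < k₂) :
    ∫ z, asymLoss k₁ k₂ z * genGauss a b z =
      (k₁ + k₂) * b * Real.Gamma (2 * a) / (2 * Real.Gamma a) :=
  expected_unshifted_loss_general a b k₁ k₂ ha hb
end

section
/- The function c ↦ ∫_{-∞}^{∞} L(z + c) · f(z) dz is differentiable on ℝ and its derivative at every real c equals (k₁ − k₂)/2 + Sgn(c)·((k₁ + k₂)/(2·Γ(a)))·γ(a, |c/b|^{1/a}). -/
open Real MeasureTheory Filter

/-!
The loss is Lipschitz with slope `k₁` on `(0, ∞)` and `-k₂` on `(-∞, 0)`, and the density has a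
finite first moment, so one may differentiate under the integral sign: the derivative at `c` is
`k₁ - (k₁ + k₂) P(Z < -c)`. The density is even, hence `P(Z < -c) = 1/2 - ∫₀ᶜ f`, and the
substitution `z = b tᵃ` turns `∫₀ˣ f` into `γ(a, (x/b)^{1/a}) / (2Γ(a))` for `x ≥ 0`.
-/

open Set Topology

-- The value at the kink `0` is immaterial: it is only used almost everywhere.
noncomputable def asymLossDeriv (k₁ k₂ y : ℝ) : ℝ := if 0 ≤ y then k₁ else -k₂

section AsymLoss

variable (k₁ k₂ : ℝ) {f : ℝ → ℝ}

lemma abs_asymLoss_sub_le (u v : ℝ) :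
    |asymLoss k₁ k₂ u - asymLoss k₁ k₂ v| ≤ (|k₁| + |k₂|) * |u - v| := by
  unfold asymLoss
  split_ifs with hu hv hv
  · rw [← mul_sub, abs_mul]
    gcongr
    exact le_add_of_nonneg_right (abs_nonneg _)
  · rw [abs_of_pos (by linarith : 0 < u - v), abs_le]
    constructor <;> nlinarith [le_abs_self k₁, neg_abs_le k₁, le_abs_self k₂, neg_abs_le k₂]
  · rw [abs_of_neg (by linarith : u - v < 0), abs_le]
    constructor <;> nlinarith [le_abs_self k₁, neg_abs_le k₁, le_abs_self k₂, neg_abs_le k₂]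
  · rw [← mul_sub, abs_mul, abs_neg]
    gcongr
    exact le_add_of_nonneg_left (abs_nonneg _)

lemma abs_asymLoss_le (y : ℝ) : |asymLoss k₁ k₂ y| ≤ (|k₁| + |k₂|) * |y| := by
  simpa [asymLoss] using abs_asymLoss_sub_le k₁ k₂ y 0

lemma lipschitzWith_asymLoss : LipschitzWith (‖k₁‖₊ + ‖k₂‖₊) (asymLoss k₁ k₂) :=
  .of_dist_le_mul fun u v => by simpa [Real.dist_eq] using abs_asymLoss_sub_le k₁ k₂ u v

lemma hasDerivAt_asymLoss {y : ℝ} (hy : y ≠ 0) :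
    HasDerivAt (asymLoss k₁ k₂) (asymLossDeriv k₁ k₂ y) y := by
  rcases hy.lt_or_gt with hy | hy
  · have hL : (fun z => -k₂ * z) =ᶠ[𝓝 y] asymLoss k₁ k₂ := by
      filter_upwards [eventually_lt_nhds hy] with z hz
      simp [asymLoss, hz.not_ge]
    simpa [asymLossDeriv, hy.not_ge] using
      ((hasDerivAt_id y).const_mul (-k₂)).congr_of_eventuallyEq hL.symm
  · have hL : (fun z => k₁ * z) =ᶠ[𝓝 y] asymLoss k₁ k₂ := by
      filter_upwards [eventually_gt_nhds hy] with z hz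
      simp [asymLoss, hz.le]
    simpa [asymLossDeriv, hy.le] using
      ((hasDerivAt_id y).const_mul k₁).congr_of_eventuallyEq hL.symm

lemma asymLossDeriv_add_mul (c : ℝ) :
    (fun z => asymLossDeriv k₁ k₂ (z + c) * f z)
      = fun z => k₁ * f z - (k₁ + k₂) * (Iio (-c)).indicator f z := by
  ext z
  by_cases hz : z < -c
  · simp only [asymLossDeriv, indicator, mem_Iio, hz, show ¬ 0 ≤ z + c by linarith, ↓reduceIte]
    ring
  · simp [asymLossDeriv, indicator, hz, show 0 ≤ z + c by linarith]

lemma integrable_asymLoss_add_mul (hf : Integrable f) (hzf : Integrable fun z => z * f z)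
    (c : ℝ) : Integrable fun z => asymLoss k₁ k₂ (z + c) * f z := by
  have hL : Continuous fun z => asymLoss k₁ k₂ (z + c) :=
    (lipschitzWith_asymLoss k₁ k₂).continuous.comp (continuous_add_const c)
  refine Integrable.mono' ((hzf.norm.add (hf.norm.const_mul |c|)).const_mul (|k₁| + |k₂|))
    (hL.aestronglyMeasurable.mul hf.aestronglyMeasurable) (.of_forall fun z => ?_)
  calc ‖asymLoss k₁ k₂ (z + c) * f z‖ ≤ (|k₁| + |k₂|) * |z + c| * |f z| := by
        rw [norm_mul, Real.norm_eq_abs, Real.norm_eq_abs]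
        gcongr
        exact abs_asymLoss_le k₁ k₂ _
    _ ≤ (|k₁| + |k₂|) * (|z| + |c|) * |f z| := by gcongr; exact abs_add_le z c
    _ = (|k₁| + |k₂|) * (‖z * f z‖ + |c| * ‖f z‖) := by
        rw [norm_mul, Real.norm_eq_abs, Real.norm_eq_abs]; ring

lemma integral_asymLossDeriv_add_mul (hf : Integrable f) (c : ℝ) :
    ∫ z, asymLossDeriv k₁ k₂ (z + c) * f z
      = k₁ * (∫ z, f z) - (k₁ + k₂) * ∫ z in Iio (-c), f z := by
  rw [asymLossDeriv_add_mul, integral_sub (hf.const_mul _)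
    ((hf.indicator measurableSet_Iio).const_mul _), integral_const_mul, integral_const_mul,
    integral_indicator measurableSet_Iio]

theorem hasDerivAt_integral_asymLoss_add_mul (hf : Integrable f)
    (hzf : Integrable fun z => z * f z) (c : ℝ) :
    HasDerivAt (fun c => ∫ z, asymLoss k₁ k₂ (z + c) * f z)
      (∫ z, asymLossDeriv k₁ k₂ (z + c) * f z) c := by
  have hF'_int : Integrable fun z => asymLossDeriv k₁ k₂ (z + c) * f z := by
    rw [asymLossDeriv_add_mul]
    exact (hf.const_mul _).sub ((hf.indicator measurableSet_Iio).const_mul _)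
  refine (hasDerivAt_integral_of_dominated_loc_of_lip (Metric.ball_mem_nhds c one_pos)
    (.of_forall fun x => (integrable_asymLoss_add_mul k₁ k₂ hf hzf x).aestronglyMeasurable)
    (integrable_asymLoss_add_mul k₁ k₂ hf hzf c) hF'_int.aestronglyMeasurable
    (bound := fun z => (|k₁| + |k₂|) * |f z|) ?_ (hf.abs.const_mul _) ?_).2
  · refine .of_forall fun z => (LipschitzWith.of_dist_le_mul fun x y => ?_).lipschitzOnWith
    rw [Real.coe_nnabs, abs_of_nonneg (by positivity), Real.dist_eq, Real.dist_eq, ← sub_mul,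
      abs_mul, mul_right_comm]
    gcongr
    simpa using abs_asymLoss_sub_le k₁ k₂ (z + x) (z + y)
  · filter_upwards [Measure.ae_ne volume (-c)] with z hz
    have hzc : z + c ≠ 0 := fun h => hz (eq_neg_of_add_eq_zero_left h)
    exact ((hasDerivAt_asymLoss k₁ k₂ hzc).comp_const_add z c).mul_const (f z)

end AsymLoss

namespace Function.Even

variable {f : ℝ → ℝ}

lemma integrable_of_integrableOn_Ioi (hf : Function.Even f) (h : IntegrableOn f (Ioi 0)) :
    Integrable f := by
  have h_Iio : IntegrableOn f (Iio 0) := by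
    rw [← integrable_indicator_iff measurableSet_Iio]
    refine ((integrable_indicator_iff measurableSet_Ioi).2 h).comp_neg.congr
      (.of_forall fun x => ?_)
    simp [indicator, hf x]
  rw [← integrableOn_univ, ← Iio_union_Ici (a := (0 : ℝ))]
  exact h_Iio.union ((integrableOn_Ici_iff_integrableOn_Ioi).2 h)

lemma intervalIntegral_zero_neg (hf : Function.Even f) (x : ℝ) :
    ∫ t in (0 : ℝ)..-x, f t = -∫ t in (0 : ℝ)..x, f t := by
  have h := intervalIntegral.integral_comp_neg (a := 0) (b := x) f
  simp only [hf _, neg_zero] at h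
  rw [intervalIntegral.integral_symm 0 (-x)] at h
  linarith

lemma integral_Iio (hf : Function.Even f) (hint : Integrable f) (x : ℝ) :
    ∫ t in Iio x, f t = (∫ t, f t) / 2 + ∫ t in (0 : ℝ)..x, f t := by
  have h_half : ∫ t in Ici (0 : ℝ), f t = ∫ t in Iio (0 : ℝ), f t := by
    rw [integral_Ici_eq_integral_Ioi, ← integral_Iic_eq_integral_Iio]
    simpa [hf _] using integral_comp_neg_Ioi 0 f
  have h_total := intervalIntegral.integral_Iio_add_Ici (b := 0)
    hint.integrableOn hint.integrableOn
  have h_diff := intervalIntegral.integral_Iio_sub_Iio' (a := 0) (b := x)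
    hint.integrableOn hint.integrableOn
  linarith

end Function.Even

lemma image_rpow_Ioc {p Y : ℝ} (hp : 0 < p) (hY : 0 ≤ Y) :
    (fun t : ℝ => t ^ p) '' Ioc 0 Y = Ioc 0 (Y ^ p) := by
  ext u
  constructor
  · rintro ⟨t, ⟨ht0, htY⟩, rfl⟩
    exact ⟨rpow_pos_of_pos ht0 p, rpow_le_rpow ht0.le htY hp.le⟩
  · rintro ⟨hu0, huY⟩
    refine ⟨u ^ p⁻¹, ⟨rpow_pos_of_pos hu0 _, ?_⟩, by simp [← rpow_mul hu0.le, hp.ne']⟩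
    calc u ^ p⁻¹ ≤ (Y ^ p) ^ p⁻¹ := by gcongr
      _ = Y := rpow_rpow_inv hY hp.ne'

lemma intervalIntegral_comp_rpow {E : Type*} [NormedAddCommGroup E] [NormedSpace ℝ E]
    (g : ℝ → E) {p Y : ℝ} (hp : 0 < p) (hY : 0 ≤ Y) :
    ∫ t in (0 : ℝ)..Y, (p * t ^ (p - 1)) • g (t ^ p) = ∫ u in (0 : ℝ)..Y ^ p, g u := by
  rw [intervalIntegral.integral_of_le hY, intervalIntegral.integral_of_le (by positivity),
    ← image_rpow_Ioc hp hY, integral_image_eq_integral_abs_deriv_smul measurableSet_Ioc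
      (fun t ht => (hasDerivAt_rpow_const (Or.inl ht.1.ne')).hasDerivWithinAt)
      ((rpow_left_injOn hp.ne').mono fun t ht => ht.1.le)]
  refine setIntegral_congr_fun measurableSet_Ioc fun t ht => ?_
  rw [abs_of_nonneg (by have := ht.1; positivity)]

noncomputable def genGaussKernel (a u : ℝ) : ℝ := exp (-|u| ^ (1 / a))

section GenGauss

variable {a b : ℝ}

lemma integrable_abs_rpow_mul_genGaussKernel (ha : 0 < a) {s : ℝ} (hs : -1 < s) :
    Integrable fun u => |u| ^ s * genGaussKernel a u := by
  refine Function.Even.integrable_of_integrableOn_Ioi (fun u => by simp [genGaussKernel]) ?_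
  refine (integrableOn_rpow_mul_exp_neg_rpow hs (by positivity : 0 < 1 / a)).congr_fun
    (fun u hu => ?_) measurableSet_Ioi
  simp [genGaussKernel, abs_of_pos (mem_Ioi.mp hu)]

lemma integrable_genGaussKernel (ha : 0 < a) : Integrable (genGaussKernel a) := by
  simpa using integrable_abs_rpow_mul_genGaussKernel ha (s := 0) (by norm_num)

lemma integrable_mul_genGaussKernel (ha : 0 < a) :
    Integrable fun u => u * genGaussKernel a u := by
  refine (integrable_abs_rpow_mul_genGaussKernel ha (s := 1) (by norm_num)).mono'
    (continuous_id.aestronglyMeasurable.mul (integrable_genGaussKernel ha).aestronglyMeasurable)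
    (.of_forall fun u => ?_)
  simp [genGaussKernel, abs_of_pos (exp_pos _)]

lemma integral_genGaussKernel (ha : 0 < a) : ∫ u, genGaussKernel a u = 2 * (a * Gamma a) := by
  rw [← Gamma_add_one ha.ne', ← one_div_one_div a, ← integral_exp_neg_rpow (by positivity),
    ← integral_comp_abs]
  simp [genGaussKernel]

lemma intervalIntegral_genGaussKernel (ha : 0 < a) {Y : ℝ} (hY : 0 ≤ Y) :
    ∫ u in (0 : ℝ)..Y ^ a, genGaussKernel a u = a * lowerGamma a Y := by
  rw [← intervalIntegral_comp_rpow _ ha hY, lowerGamma, ← intervalIntegral.integral_const_mul,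
    intervalIntegral.integral_of_le hY, intervalIntegral.integral_of_le hY]
  refine setIntegral_congr_fun measurableSet_Ioc fun t ht => ?_
  have ht0 : 0 < t := ht.1
  simp [genGaussKernel, abs_of_pos (rpow_pos_of_pos ht0 a), ← rpow_mul ht0.le, ha.ne', mul_assoc]

lemma genGauss_eq (a b z : ℝ) :
    genGauss a b z = (2 * a * b * Gamma a)⁻¹ * genGaussKernel a (z / b) := rfl

lemma genGauss_even (a b : ℝ) : Function.Even (genGauss a b) := fun z => by
  simp [genGauss, neg_div]

lemma integrable_genGauss (ha : 0 < a) (hb : 0 < b) : Integrable (genGauss a b) :=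
  ((integrable_genGaussKernel ha).comp_div hb.ne').const_mul _

lemma integrable_mul_genGauss (ha : 0 < a) (hb : 0 < b) :
    Integrable fun z => z * genGauss a b z := by
  refine (((integrable_mul_genGaussKernel ha).comp_div hb.ne').const_mul
    ((2 * a * b * Gamma a)⁻¹ * b)).congr (.of_forall fun z => ?_)
  simp only [genGauss_eq]
  field_simp

lemma integral_genGauss (ha : 0 < a) (hb : 0 < b) : ∫ z, genGauss a b z = 1 := by
  simp_rw [genGauss_eq]
  rw [integral_const_mul, Measure.integral_comp_div, integral_genGaussKernel ha, smul_eq_mul,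
    abs_of_pos hb]
  have := (Gamma_pos_of_pos ha).ne'
  field_simp

lemma intervalIntegral_genGauss_of_nonneg (ha : 0 < a) (hb : 0 < b) {x : ℝ} (hx : 0 ≤ x) :
    ∫ z in (0 : ℝ)..x, genGauss a b z = lowerGamma a ((x / b) ^ (1 / a)) / (2 * Gamma a) := by
  have hxb : ((x / b) ^ (1 / a)) ^ a = x / b := by
    rw [← rpow_mul (by positivity), one_div_mul_cancel ha.ne', rpow_one]
  simp_rw [genGauss_eq]
  rw [intervalIntegral.integral_const_mul, intervalIntegral.integral_comp_div _ hb.ne', zero_div]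
  conv_lhs => rw [← hxb]
  rw [intervalIntegral_genGaussKernel ha (by positivity), smul_eq_mul]
  have := (Gamma_pos_of_pos ha).ne'
  field_simp

lemma intervalIntegral_genGauss (ha : 0 < a) (hb : 0 < b) (c : ℝ) :
    ∫ z in (0 : ℝ)..c, genGauss a b z
      = Sgn c * lowerGamma a (|c / b| ^ (1 / a)) / (2 * Gamma a) := by
  rcases le_or_gt 0 c with hc | hc
  · rw [intervalIntegral_genGauss_of_nonneg ha hb hc, Sgn, if_pos hc, one_mul,
      abs_of_nonneg (by positivity)]
  · calc ∫ z in (0 : ℝ)..c, genGauss a b z = -∫ z in (0 : ℝ)..-c, genGauss a b z := by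
          rw [(genGauss_even a b).intervalIntegral_zero_neg, neg_neg]
      _ = _ := by
          rw [intervalIntegral_genGauss_of_nonneg ha hb (by linarith), Sgn, if_neg hc.not_ge,
            abs_of_neg (div_neg_of_neg_of_pos hc hb), neg_div]
          ring

end GenGauss

theorem hasDerivAt_expected_loss_general (a b k₁ k₂ : ℝ) (ha : 0 < a) (hb : 0 < b)
    (c : ℝ) :
    HasDerivAt (fun c : ℝ => ∫ z, asymLoss k₁ k₂ (z + c) * genGauss a b z)
      ((k₁ - k₂) / 2
        + Sgn c * ((k₁ + k₂) / (2 * Real.Gamma a)) * lowerGamma a (|c / b| ^ (1 / a))) c := by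
  have hf := integrable_genGauss ha hb
  have h := hasDerivAt_integral_asymLoss_add_mul k₁ k₂ hf (integrable_mul_genGauss ha hb) c
  rw [integral_asymLossDeriv_add_mul k₁ k₂ hf, (genGauss_even a b).integral_Iio hf,
    (genGauss_even a b).intervalIntegral_zero_neg, integral_genGauss ha hb,
    intervalIntegral_genGauss ha hb] at h
  convert h using 1
  ring

theorem hasDerivAt_expected_loss (a b k₁ k₂ : ℝ) (ha : 0 < a) (hb : 0 < b)
    (hk₁ : 0 < k₁) (hk₂ : 0 < k₂) (c : ℝ) :
    HasDerivAt (fun c : ℝ => ∫ z, asymLoss k₁ k₂ (z + c) * genGauss a b z)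
      ((k₁ - k₂) / 2
        + Sgn c * ((k₁ + k₂) / (2 * Real.Gamma a)) * lowerGamma a (|c / b| ^ (1 / a))) c :=
  hasDerivAt_expected_loss_general a b k₁ k₂ ha hb c
end

section
/- For every real a > 0, we have 2·Γ(2a) − a·Γ(a)² > 0. -/
/-!
Multiplying by `a`, the inequality reads `Γ(a+1)² < Γ(2a+1)`, the case `u = v = a` of
`Γ(u+1) Γ(v+1) < Γ(u+v+1)`. This follows from the Beta integral
`Γ(u) Γ(v+1) = Γ(u+v+1) ∫₀¹ t^(u-1) (1-t)^v` and the bound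
`∫₀¹ t^(u-1) (1-t)^v < ∫₀¹ t^(u-1) = 1/u`.
-/

open Real MeasureTheory Filter

theorem Complex.betaIntegral_ofReal (u v : ℝ) :
    Complex.betaIntegral u v = ↑(∫ t in (0:ℝ)..1, t ^ (u - 1) * (1 - t) ^ (v - 1)) := by
  rw [Complex.betaIntegral, ← intervalIntegral.integral_ofReal]
  refine intervalIntegral.integral_congr fun t ht => ?_
  rw [Set.uIcc_of_le zero_le_one] at ht
  push_cast [Complex.ofReal_cpow ht.1, Complex.ofReal_cpow (sub_nonneg.2 ht.2)]
  rfl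

theorem Real.Gamma_mul_Gamma_eq_Gamma_add_mul_integral {u v : ℝ} (hu : 0 < u) (hv : 0 < v) :
    Gamma u * Gamma v = Gamma (u + v) * ∫ t in (0:ℝ)..1, t ^ (u - 1) * (1 - t) ^ (v - 1) := by
  have h := Complex.Gamma_mul_Gamma_eq_betaIntegral (s := u) (t := v)
    (by simpa using hu) (by simpa using hv)
  rw [Complex.betaIntegral_ofReal, ← Complex.ofReal_add, Complex.Gamma_ofReal,
    Complex.Gamma_ofReal, Complex.Gamma_ofReal] at h
  exact_mod_cast h

theorem integral_rpow_mul_one_sub_rpow_lt_one_div {u v : ℝ} (hu : 0 < u) (hv : 0 < v) :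
    ∫ t in (0:ℝ)..1, t ^ (u - 1) * (1 - t) ^ v < 1 / u := by
  have hint : IntervalIntegrable (fun t : ℝ => t ^ (u - 1)) volume 0 1 :=
    intervalIntegral.intervalIntegrable_rpow' (by linarith)
  have hint' : IntervalIntegrable (fun t : ℝ => t ^ (u - 1) * (1 - t) ^ v) volume 0 1 :=
    hint.mul_continuousOn (by fun_prop (disch := exact hv.le))
  have hpos : 0 < ∫ t in (0:ℝ)..1, (t ^ (u - 1) - t ^ (u - 1) * (1 - t) ^ v) := by
    refine intervalIntegral.intervalIntegral_pos_of_pos_on (hint.sub hint') (fun t ht => ?_)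
      zero_lt_one
    have : (1 - t) ^ v < 1 := Real.rpow_lt_one (by linarith [ht.2]) (by linarith [ht.1]) hv
    nlinarith [Real.rpow_pos_of_pos ht.1 (u - 1)]
  rw [intervalIntegral.integral_sub hint hint', integral_rpow (Or.inl (by linarith)),
    sub_add_cancel, one_rpow, zero_rpow hu.ne'] at hpos
  linarith

theorem Real.Gamma_add_one_mul_Gamma_add_one_lt {u v : ℝ} (hu : 0 < u) (hv : 0 < v) :
    Gamma (u + 1) * Gamma (v + 1) < Gamma (u + v + 1) := by
  have hbeta := Gamma_mul_Gamma_eq_Gamma_add_mul_integral hu (by linarith : 0 < v + 1)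
  rw [add_sub_cancel_right, ← add_assoc] at hbeta
  have hlt := integral_rpow_mul_one_sub_rpow_lt_one_div hu hv
  rw [Gamma_add_one hu.ne', mul_assoc, hbeta]
  calc u * (Gamma (u + v + 1) * _) < u * (Gamma (u + v + 1) * (1 / u)) := by
        gcongr
    _ = Gamma (u + v + 1) := by field_simp

theorem gamma_inequality (a : ℝ) (ha : 0 < a) :
    2 * Real.Gamma (2 * a) - a * Real.Gamma a ^ 2 > 0 := by
  have h := Real.Gamma_add_one_mul_Gamma_add_one_lt ha ha
  rw [show a + a = 2 * a by ring, Real.Gamma_add_one ha.ne',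
    Real.Gamma_add_one (by positivity : 2 * a ≠ 0)] at h
  have h' : a * (a * Real.Gamma a ^ 2) < a * (2 * Real.Gamma (2 * a)) := by linarith
  linarith [lt_of_mul_lt_mul_left h' ha.le]
end
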